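/- A reduced semistandard Young tableau T with entries in [n] (no two equal columns) is maximal (its columns form a maximal chain in the tableau order on nonempty subsets of [n]) if and only if the set of all parts of the partitions λ^{(i)}(T) for i ∈ [n] equals {1, 2, …, binom(n+1,2)}, where λ^{(i)}(T) is the shape of the tableau obtained from T by removing all cells with labels greater than i. -/

import Mathlib

/-- The `k`-th smallest element of a finite set of naturals (0-indexed). -/
def nthSmall (A : Finset ℕ) (k : ℕ) : ℕ := (A.sort (· ≤ ·)).getD k 0

/-- The tableau (Gale) order on finite sets of naturals. -/
def galeLe (A B : Finset ℕ) : Prop :=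
  B.card ≤ A.card ∧ ∀ k < B.card, nthSmall A k ≤ nthSmall B k

/-- A chain in the poset `T_n` of nonempty subsets of `[n]` under the tableau order. -/
def IsGaleChain (n : ℕ) (𝒞 : Finset (Finset ℕ)) : Prop :=
  (∀ A ∈ 𝒞, A.Nonempty ∧ A ⊆ Finset.Icc 1 n) ∧
    ∀ A ∈ 𝒞, ∀ B ∈ 𝒞, galeLe A B ∨ galeLe B A

/-- A maximal chain in `T_n`. -/
def IsMaximalGaleChain (n : ℕ) (𝒞 : Finset (Finset ℕ)) : Prop :=
  IsGaleChain n 𝒞 ∧ ∀ 𝒟 : Finset (Finset ℕ), IsGaleChain n 𝒟 → 𝒞 ⊆ 𝒟 → 𝒟 = 𝒞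

/-- The set of entries of the `j`-th column (0-indexed) of a semistandard Young
tableau. -/
def colSetOf (μ : YoungDiagram) (T : SemistandardYoungTableau μ) (j : ℕ) : Finset ℕ :=
  (Finset.range (μ.colLen j)).image (fun i => T i j)

/-- `λ^{(k)}_{i+1}`: the length of row `i` (0-indexed) of the tableau `T` restricted
to entries `≤ k`. -/
def partRow (μ : YoungDiagram) (T : SemistandardYoungTableau μ) (k i : ℕ) : ℕ :=
  ((Finset.range (μ.rowLen i)).filter (fun j => T i j ≤ k)).card

/-!
The tableau order is read off the counting functions `m ↦ #{a ∈ A | a ≤ m}`: `A ⊑ B` iff the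
count of `B` is pointwise at most that of `A`. Summing the counts over `m ≤ n` gives a strictly
antitone rank on `T_n` with values in `[1, binom(n+1,2)]`, so a chain has at most `binom(n+1,2)`
elements. Conversely, if `A ⊏ B` there is `C` with `A ⊏ C ⊑ B` and rank one less than that of
`A`, obtained by moving one element of `A` up by one or deleting `n`. When `B` is the successor of
`A` in a maximal chain, `C` is comparable with the whole chain and hence belongs to it; so a maximal
chain takes every rank and has exactly `binom(n+1,2)` elements.

For a reduced tableau the parts of the `λ^{(i)}` are exactly `1, …, ℓ` with `ℓ` the number of
columns: the part `j + 1` is `λ^{(T r j)}_r` for a row `r` that ends at column `j` or increases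
strictly from column `j` to column `j + 1`, and such a row exists because these two columns differ.
-/

open Finset

def countLe (A : Finset ℕ) (m : ℕ) : ℕ := #(A.filter (· ≤ m))

section CountLe

variable {A B : Finset ℕ}

lemma countLe_le_card (A : Finset ℕ) (m : ℕ) : countLe A m ≤ #A := card_filter_le _ _

lemma countLe_mono_of_subset (h : A ⊆ B) (m : ℕ) : countLe A m ≤ countLe B m :=
  card_le_card (filter_subset_filter _ h)

lemma monotone_countLe (A : Finset ℕ) : Monotone (countLe A) := fun _ _ h =>
  card_le_card fun _ hx => mem_filter.2 ⟨(mem_filter.1 hx).1, (mem_filter.1 hx).2.trans h⟩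

lemma countLe_eq_card {m : ℕ} (h : ∀ a ∈ A, a ≤ m) : countLe A m = #A :=
  congrArg card (filter_true_of_mem h)

lemma countLe_of_subset_Icc {n m : ℕ} (hA : A ⊆ Icc 1 n) (hm : n ≤ m) :
    countLe A m = countLe A n := by
  have h : ∀ a ∈ A, a ≤ n := fun a ha => (mem_Icc.1 (hA ha)).2
  rw [countLe_eq_card h, countLe_eq_card fun a ha => (h a ha).trans hm]

lemma countLe_succ (A : Finset ℕ) (m : ℕ) :
    countLe A (m + 1) = countLe A m + if m + 1 ∈ A then 1 else 0 := by
  simp only [countLe, card_filter]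
  rw [← sum_ite_eq' A (m + 1) (fun _ => 1), ← sum_add_distrib]
  refine sum_congr rfl fun x _ => ?_
  split_ifs <;> omega

lemma countLe_insert {a : ℕ} (ha : a ∉ A) (m : ℕ) :
    countLe (insert a A) m = countLe A m + if a ≤ m then 1 else 0 := by
  simp only [countLe, card_filter, sum_insert ha, add_comm]

lemma countLe_erase_add {a : ℕ} (ha : a ∈ A) (m : ℕ) :
    countLe (A.erase a) m + (if a ≤ m then 1 else 0) = countLe A m := by
  simp only [countLe, card_filter, sum_erase_add _ _ ha]

lemma countLe_succ_lt_of_mem {m : ℕ} (h : countLe B m < countLe A m) (hm : m + 1 ∈ A) :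
    countLe B (m + 1) < countLe A (m + 1) := by
  rw [countLe_succ A, countLe_succ B, if_pos hm]
  split_ifs <;> omega

/-- If the counts differ at `m`, they already differ at the largest element of `A` below `m`. -/
lemma exists_mem_countLe_lt {m : ℕ} (h : countLe B m < countLe A m) :
    ∃ a ∈ A, countLe B a < countLe A a := by
  have hne : (A.filter (· ≤ m)).Nonempty := card_pos.1 ((Nat.zero_le _).trans_lt h)
  set a := (A.filter (· ≤ m)).max' hne
  have ha : a ∈ A ∧ a ≤ m := mem_filter.1 (max'_mem _ hne)
  have hcount : countLe A a = countLe A m := by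
    refine congrArg card (filter_congr fun x hx => ⟨fun hxa => hxa.trans ha.2, fun hxm => ?_⟩)
    exact le_max' _ x (mem_filter.2 ⟨hx, hxm⟩)
  exact ⟨a, ha.1, hcount ▸ (monotone_countLe B ha.2).trans_lt h⟩

end CountLe

lemma Monotone.le_iff_lt_card_filter {c : ℕ} {g : Fin c → ℕ} (hg : Monotone g) (k : Fin c)
    (m : ℕ) : g k ≤ m ↔ (k : ℕ) < #{i | g i ≤ m} := by
  constructor
  · intro hk
    calc (k : ℕ) < #(Iic k) := by simp
      _ ≤ #{i | g i ≤ m} := card_le_card fun i hi =>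
        mem_filter.2 ⟨mem_univ _, (hg (mem_Iic.1 hi)).trans hk⟩
  · intro hk
    by_contra! hlt
    have : #{i | g i ≤ m} ≤ #(Iio k) := card_le_card fun i hi => mem_Iio.2 <| by
      by_contra! hki
      exact absurd (mem_filter.1 hi).2 (not_le.2 (hlt.trans_le (hg hki)))
    rw [Fin.card_Iio] at this
    omega

lemma nthSmall_eq_orderEmbOfFin (A : Finset ℕ) {k : ℕ} (hk : k < #A) :
    nthSmall A k = A.orderEmbOfFin rfl ⟨k, hk⟩ := by
  rw [nthSmall, orderEmbOfFin_apply, List.getD_eq_getElem _ _ (by simpa using hk)]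
  rfl

lemma nthSmall_le_iff_lt_countLe (A : Finset ℕ) {k : ℕ} (hk : k < #A) (m : ℕ) :
    nthSmall A k ≤ m ↔ k < countLe A m := by
  set f := A.orderEmbOfFin rfl
  have hcount : countLe A m = #{i | f i ≤ m} := calc
    countLe A m = #((univ.image f).filter (· ≤ m)) := by rw [image_orderEmbOfFin_univ]; rfl
    _ = #{i | f i ≤ m} := by rw [filter_image, card_image_of_injective _ f.injective]
  rw [hcount, nthSmall_eq_orderEmbOfFin A hk]
  exact f.monotone.le_iff_lt_card_filter ⟨k, hk⟩ m

section Gale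

variable {A B C : Finset ℕ} {n : ℕ}

lemma galeLe_iff_countLe : galeLe A B ↔ ∀ m, countLe B m ≤ countLe A m := by
  constructor
  · rintro ⟨hcard, hnth⟩ m
    by_contra! hlt
    have hk : countLe A m < #B := hlt.trans_le (countLe_le_card B m)
    have hB := (nthSmall_le_iff_lt_countLe B hk m).2 hlt
    have hA := (nthSmall_le_iff_lt_countLe A (hk.trans_le hcard) m).1 ((hnth _ hk).trans hB)
    exact lt_irrefl _ hA
  · intro h
    have hcard : #B ≤ #A := by
      have hA : ∀ a ∈ A, a ≤ A.sup id + B.sup id := fun a ha =>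
        (le_sup (f := id) ha).trans (Nat.le_add_right _ _)
      have hB : ∀ b ∈ B, b ≤ A.sup id + B.sup id := fun b hb =>
        (le_sup (f := id) hb).trans (Nat.le_add_left _ _)
      simpa only [countLe_eq_card hA, countLe_eq_card hB] using h (A.sup id + B.sup id)
    refine ⟨hcard, fun k hk => ?_⟩
    have hkB := (nthSmall_le_iff_lt_countLe B hk _).1 le_rfl
    exact (nthSmall_le_iff_lt_countLe A (hk.trans_le hcard) _).2 (hkB.trans_le (h _))

lemma galeLe_iff_countLe_of_subset_Icc (hA : A ⊆ Icc 1 n) (hB : B ⊆ Icc 1 n) :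
    galeLe A B ↔ ∀ m ≤ n, countLe B m ≤ countLe A m := by
  refine galeLe_iff_countLe.trans ⟨fun h m _ => h m, fun h m => ?_⟩
  rcases le_total m n with hm | hm
  · exact h m hm
  · rw [countLe_of_subset_Icc hA hm, countLe_of_subset_Icc hB hm]
    exact h n le_rfl

lemma galeLe_refl (A : Finset ℕ) : galeLe A A := galeLe_iff_countLe.2 fun _ => le_rfl

lemma galeLe_trans (hAB : galeLe A B) (hBC : galeLe B C) : galeLe A C := by
  rw [galeLe_iff_countLe] at *
  exact fun m => (hBC m).trans (hAB m)

lemma galeLe_antisymm (hAB : galeLe A B) (hBA : galeLe B A) : A = B := by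
  have hcard : #A = #B := le_antisymm hBA.1 hAB.1
  have hsort : A.sort (· ≤ ·) = B.sort (· ≤ ·) := by
    refine List.ext_getElem (by simp [hcard]) fun k hkA hkB => ?_
    have hkA' : k < #A := by simpa using hkA
    have hkB' : k < #B := by simpa using hkB
    have := le_antisymm (hAB.2 k hkB') (hBA.2 k hkA')
    rwa [nthSmall, nthSmall, List.getD_eq_getElem _ _ hkA, List.getD_eq_getElem _ _ hkB] at this
  simpa using congrArg List.toFinset hsort

lemma galeLe_Icc (hA : A ⊆ Icc 1 n) : galeLe (Icc 1 n) A :=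
  galeLe_iff_countLe.2 (countLe_mono_of_subset hA)

lemma galeLe_singleton (hA : A ⊆ Icc 1 n) (hne : A.Nonempty) : galeLe A {n} := by
  have hn : 1 ≤ n := nonempty_Icc.1 (hne.mono hA)
  refine (galeLe_iff_countLe_of_subset_Icc hA (by simpa using hn)).2 fun m hm => ?_
  rcases hm.lt_or_eq with hm | rfl
  · simp [countLe, filter_singleton, hm.not_ge]
  · rw [countLe_eq_card (by simp), card_singleton,
      countLe_eq_card fun a ha => (mem_Icc.1 (hA ha)).2]
    exact card_pos.2 hne

end Gale

def galeWeight (n : ℕ) (A : Finset ℕ) : ℕ := ∑ m ∈ range (n + 1), countLe A m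

section Weight

variable {A B C : Finset ℕ} {n : ℕ}

lemma galeWeight_le_of_galeLe (h : galeLe A B) : galeWeight n B ≤ galeWeight n A :=
  sum_le_sum fun m _ => galeLe_iff_countLe.1 h m

lemma galeWeight_lt_of_galeLe (hA : A ⊆ Icc 1 n) (hB : B ⊆ Icc 1 n) (h : galeLe A B)
    (hne : A ≠ B) : galeWeight n B < galeWeight n A := by
  have hle : ∀ m ∈ range (n + 1), countLe B m ≤ countLe A m := fun m _ =>
    galeLe_iff_countLe.1 h m
  refine (sum_le_sum hle).lt_of_ne fun heq => hne (galeLe_antisymm h ?_)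
  refine (galeLe_iff_countLe_of_subset_Icc hB hA).2 fun m hm => ?_
  exact ((sum_eq_sum_iff_of_le hle).1 heq m (mem_range.2 (Nat.lt_succ_of_le hm))).ge

lemma galeWeight_Icc (n : ℕ) : galeWeight n (Icc 1 n) = (n + 1).choose 2 := by
  have hcount : ∀ m ∈ range (n + 1), countLe (Icc 1 n) m = m := fun m hm => by
    have : (Icc 1 n).filter (· ≤ m) = Icc 1 m := by
      ext x; simp only [mem_filter, mem_Icc, mem_range] at hm ⊢; omega
    simp [countLe, this]
  rw [galeWeight, sum_congr rfl hcount, sum_range_id, Nat.choose_two_right, Nat.add_sub_cancel,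
    mul_comm]

lemma galeWeight_singleton (hn : 1 ≤ n) : galeWeight n {n} = 1 := by
  have hcount : ∀ m ∈ range (n + 1), countLe {n} m = if m = n then 1 else 0 := fun m hm => by
    rw [mem_range] at hm
    rcases (Nat.lt_succ_iff.1 hm).lt_or_eq with hlt | rfl
    · simp [countLe, filter_singleton, hlt.not_ge, hlt.ne]
    · simp [countLe, filter_singleton]
  rw [galeWeight, sum_congr rfl hcount, sum_ite_eq', if_pos (self_mem_range_succ n)]

lemma one_le_galeWeight (hA : A ⊆ Icc 1 n) (hne : A.Nonempty) : 1 ≤ galeWeight n A := by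
  have hn : countLe A n = #A := countLe_eq_card fun a ha => (mem_Icc.1 (hA ha)).2
  calc 1 ≤ countLe A n := hn ▸ card_pos.2 hne
    _ ≤ galeWeight n A := single_le_sum (fun _ _ => Nat.zero_le _) (self_mem_range_succ n)

lemma galeWeight_le_choose (hA : A ⊆ Icc 1 n) : galeWeight n A ≤ (n + 1).choose 2 :=
  galeWeight_Icc n ▸ galeWeight_le_of_galeLe (galeLe_Icc hA)

lemma galeWeight_add_one_of_countLe_add_ite {e : ℕ} (he : e ≤ n)
    (hCA : ∀ m ≤ n, countLe C m + (if m = e then 1 else 0) = countLe A m) :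
    galeWeight n C + 1 = galeWeight n A := by
  have hCA' : ∀ m ∈ range (n + 1), countLe C m + (if m = e then 1 else 0) = countLe A m :=
    fun m hm => hCA m (Nat.lt_succ_iff.1 (mem_range.1 hm))
  rw [galeWeight, galeWeight, ← sum_congr rfl hCA', sum_add_distrib, sum_ite_eq',
    if_pos (mem_range.2 (Nat.lt_succ_of_le he))]

end Weight

/-- Take `e` the largest element of `A` at which the count of `A` exceeds that of `B`; then
`e + 1 ∉ A` unless `e = n`, so `e` can be moved up to `e + 1` (or deleted, if `e = n`). This lowers
the count of `A` by one at `e` only, which keeps it above the count of `B`. -/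
lemma exists_galeLe_galeWeight_add_one {n : ℕ} {A B : Finset ℕ} (hA : A ⊆ Icc 1 n)
    (hB : B ⊆ Icc 1 n) (hAB : galeLe A B) (hne : A ≠ B) :
    ∃ C ⊆ Icc 1 n, galeLe A C ∧ galeLe C B ∧ galeWeight n C + 1 = galeWeight n A := by
  obtain ⟨m, hm⟩ : ∃ m, countLe B m < countLe A m := by
    by_contra! h
    exact hne (galeLe_antisymm hAB (galeLe_iff_countLe.2 h))
  set S := A.filter fun a => countLe B a < countLe A a
  have hS : S.Nonempty := by
    obtain ⟨a, ha, hlt⟩ := exists_mem_countLe_lt hm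
    exact ⟨a, mem_filter.2 ⟨ha, hlt⟩⟩
  set e := S.max' hS
  obtain ⟨heA, hBe⟩ : e ∈ A ∧ countLe B e < countLe A e := mem_filter.1 (max'_mem S hS)
  have hen : e ≤ n := (mem_Icc.1 (hA heA)).2
  obtain ⟨C, hC, hCA⟩ : ∃ C ⊆ Icc 1 n,
      ∀ m ≤ n, countLe C m + (if m = e then 1 else 0) = countLe A m := by
    rcases hen.lt_or_eq with hlt | rfl
    · have hsucc : e + 1 ∉ A := fun hmem =>
        (le_max' S (e + 1) (mem_filter.2 ⟨hmem, countLe_succ_lt_of_mem hBe hmem⟩)).not_gt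
          e.lt_succ_self
      refine ⟨insert (e + 1) (A.erase e),
        insert_subset (mem_Icc.2 ⟨by omega, hlt⟩) ((erase_subset e A).trans hA), fun m _ => ?_⟩
      have := countLe_erase_add heA m
      rw [countLe_insert (fun h => hsucc (mem_of_mem_erase h))]
      split_ifs at * <;> omega
    · refine ⟨A.erase e, (erase_subset e A).trans hA, fun m hm => ?_⟩
      have := countLe_erase_add heA m
      split_ifs at * <;> omega
  rw [galeLe_iff_countLe_of_subset_Icc hA hB] at hAB
  refine ⟨C, hC, (galeLe_iff_countLe_of_subset_Icc hA hC).2 fun m hm => ?_,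
    (galeLe_iff_countLe_of_subset_Icc hC hB).2 fun m hm => ?_,
    galeWeight_add_one_of_countLe_add_ite hen hCA⟩
  · have := hCA m hm
    omega
  · have := hCA m hm
    have := hAB m hm
    split_ifs at * with hme
    · subst hme; omega
    · omega

namespace IsGaleChain

variable {n : ℕ} {𝒞 : Finset (Finset ℕ)}

lemma injOn_galeWeight (h : IsGaleChain n 𝒞) : Set.InjOn (galeWeight n) 𝒞 := by
  intro A hA B hB heq
  by_contra hne
  rcases h.2 A hA B hB with hAB | hBA
  · exact (galeWeight_lt_of_galeLe (h.1 A hA).2 (h.1 B hB).2 hAB hne).ne heq.symm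
  · exact (galeWeight_lt_of_galeLe (h.1 B hB).2 (h.1 A hA).2 hBA (Ne.symm hne)).ne heq

lemma card_le (h : IsGaleChain n 𝒞) : #𝒞 ≤ (n + 1).choose 2 :=
  calc #𝒞 = #(𝒞.image (galeWeight n)) := (card_image_of_injOn h.injOn_galeWeight).symm
    _ ≤ #(Icc 1 ((n + 1).choose 2)) := card_le_card <| image_subset_iff.2 fun A hA =>
        mem_Icc.2 ⟨one_le_galeWeight (h.1 A hA).2 (h.1 A hA).1, galeWeight_le_choose (h.1 A hA).2⟩
    _ = (n + 1).choose 2 := by simp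

lemma insert {C : Finset ℕ} (h : IsGaleChain n 𝒞) (hC : C.Nonempty ∧ C ⊆ Icc 1 n)
    (hcomp : ∀ A ∈ 𝒞, galeLe C A ∨ galeLe A C) : IsGaleChain n (insert C 𝒞) := by
  refine ⟨fun A hA => ?_, fun A hA B hB => ?_⟩
  · rcases mem_insert.1 hA with rfl | hA
    exacts [hC, h.1 A hA]
  · rcases mem_insert.1 hA with rfl | hA' <;> rcases mem_insert.1 hB with rfl | hB'
    · exact Or.inl (galeLe_refl _)
    · exact hcomp B hB'
    · exact (hcomp A hA').symm
    · exact h.2 A hA' B hB'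

end IsGaleChain

namespace IsMaximalGaleChain

variable {n : ℕ} {𝒞 : Finset (Finset ℕ)}

lemma mem_of_forall_comparable {C : Finset ℕ} (h : IsMaximalGaleChain n 𝒞)
    (hC : C.Nonempty ∧ C ⊆ Icc 1 n) (hcomp : ∀ A ∈ 𝒞, galeLe C A ∨ galeLe A C) : C ∈ 𝒞 :=
  h.2 _ (h.1.insert hC hcomp) (subset_insert C 𝒞) ▸ mem_insert_self C 𝒞

lemma exists_galeWeight_add_one_eq {A : Finset ℕ} (h : IsMaximalGaleChain n 𝒞) (hA : A ∈ 𝒞)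
    (hw : 1 < galeWeight n A) : ∃ C ∈ 𝒞, galeWeight n C + 1 = galeWeight n A := by
  classical
  obtain ⟨hAne, hAn⟩ := h.1.1 A hA
  have hn : 1 ≤ n := nonempty_Icc.1 (hAne.mono hAn)
  have htop : {n} ∈ 𝒞 := h.mem_of_forall_comparable ⟨singleton_nonempty n, by simpa using hn⟩
    fun B hB => Or.inr (galeLe_singleton (h.1.1 B hB).2 (h.1.1 B hB).1)
  set above := 𝒞.filter fun B => galeLe A B ∧ B ≠ A
  have habove : above.Nonempty := ⟨{n}, mem_filter.2 ⟨htop, galeLe_singleton hAn hAne,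
    fun heq => by rw [← heq, galeWeight_singleton hn] at hw; exact lt_irrefl 1 hw⟩⟩
  obtain ⟨B, hB, hBmax⟩ := exists_max_image above (galeWeight n) habove
  obtain ⟨hB𝒞, hAB, hBA⟩ := mem_filter.1 hB
  obtain ⟨hBne, hBn⟩ := h.1.1 B hB𝒞
  obtain ⟨C, hCn, hAC, hCB, hCw⟩ := exists_galeLe_galeWeight_add_one hAn hBn hAB hBA.symm
  refine ⟨C, h.mem_of_forall_comparable ⟨?_, hCn⟩ fun Y hY => ?_, hCw⟩
  · exact card_pos.1 ((card_pos.2 hBne).trans_le hCB.1)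
  rcases h.1.2 Y hY A hA with hYA | hAY
  · exact Or.inr (galeLe_trans hYA hAC)
  by_cases hYA : Y = A
  · exact Or.inr (hYA ▸ hAC)
  rcases h.1.2 Y hY B hB𝒞 with hYB | hBY
  · by_cases hYB' : Y = B
    · exact Or.inl (hYB' ▸ hCB)
    · have hlt := galeWeight_lt_of_galeLe (h.1.1 Y hY).2 hBn hYB hYB'
      have hle := hBmax Y (mem_filter.2 ⟨hY, hAY, hYA⟩)
      omega
  · exact Or.inl (galeLe_trans hCB hBY)

lemma exists_galeWeight_eq (h : IsMaximalGaleChain n 𝒞) {v : ℕ} (hv1 : 1 ≤ v)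
    (hvN : v ≤ (n + 1).choose 2) : ∃ A ∈ 𝒞, galeWeight n A = v := by
  obtain ⟨d, hd⟩ := Nat.exists_eq_add_of_le hvN
  induction d generalizing v with
  | zero =>
    have hn : 1 ≤ n := Nat.one_le_iff_ne_zero.2 fun hn => by simp [hn] at hvN; omega
    refine ⟨Icc 1 n, h.mem_of_forall_comparable ⟨nonempty_Icc.2 hn, Subset.rfl⟩ fun B hB =>
      Or.inl (galeLe_Icc (h.1.1 B hB).2), ?_⟩
    rw [galeWeight_Icc, hd, add_zero]
  | succ d ih =>
    obtain ⟨A, hA, hAw⟩ := ih (v := v + 1) (by omega) (by omega) (by omega)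
    obtain ⟨C, hC, hCw⟩ := h.exists_galeWeight_add_one_eq hA (by omega)
    exact ⟨C, hC, by omega⟩

lemma card_eq (h : IsMaximalGaleChain n 𝒞) : #𝒞 = (n + 1).choose 2 := by
  refine le_antisymm h.1.card_le ?_
  calc (n + 1).choose 2 = #(Icc 1 ((n + 1).choose 2)) := by simp
    _ ≤ #(𝒞.image (galeWeight n)) := card_le_card fun v hv =>
        mem_image.2 (h.exists_galeWeight_eq (mem_Icc.1 hv).1 (mem_Icc.1 hv).2)
    _ ≤ #𝒞 := card_image_le

end IsMaximalGaleChain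

lemma IsGaleChain.isMaximalGaleChain_iff {n : ℕ} {𝒞 : Finset (Finset ℕ)} (h : IsGaleChain n 𝒞) :
    IsMaximalGaleChain n 𝒞 ↔ #𝒞 = (n + 1).choose 2 :=
  ⟨IsMaximalGaleChain.card_eq, fun hcard =>
    ⟨h, fun _ h𝒟 hsub => (eq_of_subset_of_card_le hsub (hcard ▸ h𝒟.card_le)).symm⟩⟩

section Tableau

variable {μ : YoungDiagram} (T : SemistandardYoungTableau μ)

lemma injOn_col (j : ℕ) : Set.InjOn (fun i => T i j) (range (μ.colLen j)) :=
  StrictMonoOn.injOn fun _ _ _ hi2 hlt =>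
    T.col_strict hlt (YoungDiagram.mem_iff_lt_colLen.2 (mem_range.1 hi2))

lemma countLe_colSetOf (j m : ℕ) :
    countLe (colSetOf μ T j) m = #((range (μ.colLen j)).filter fun i => T i j ≤ m) := by
  rw [countLe, colSetOf, filter_image,
    card_image_of_injOn ((injOn_col T j).mono (coe_subset.2 (filter_subset _ _)))]

lemma galeLe_colSetOf {j₁ j₂ : ℕ} (hj : j₁ ≤ j₂) : galeLe (colSetOf μ T j₁) (colSetOf μ T j₂) := by
  refine galeLe_iff_countLe.2 fun m => ?_
  rw [countLe_colSetOf, countLe_colSetOf]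
  refine card_le_card fun i hi => ?_
  obtain ⟨hi, hTi⟩ := mem_filter.1 hi
  have hcell : (i, j₂) ∈ μ := YoungDiagram.mem_iff_lt_colLen.2 (mem_range.1 hi)
  exact mem_filter.2 ⟨mem_range.2 ((mem_range.1 hi).trans_le (μ.colLen_anti j₁ j₂ hj)),
    (T.row_weak_of_le hj hcell).trans hTi⟩

lemma isGaleChain_colSetOf {n : ℕ} (hentries : ∀ c ∈ μ.cells, 1 ≤ T c.1 c.2 ∧ T c.1 c.2 ≤ n) :
    IsGaleChain n ((range (μ.rowLen 0)).image (colSetOf μ T)) := by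
  refine ⟨fun A hA => ?_, fun A hA B hB => ?_⟩
  · obtain ⟨j, hj, rfl⟩ := mem_image.1 hA
    have hj0 : (0, j) ∈ μ := YoungDiagram.mem_iff_lt_rowLen.2 (mem_range.1 hj)
    refine ⟨⟨T 0 j, mem_image_of_mem _ (mem_range.2 (YoungDiagram.mem_iff_lt_colLen.1 hj0))⟩,
      fun x hx => ?_⟩
    obtain ⟨i, hi, rfl⟩ := mem_image.1 hx
    exact mem_Icc.2 (hentries (i, j) (YoungDiagram.mem_iff_lt_colLen.2 (mem_range.1 hi)))
  · obtain ⟨j₁, -, rfl⟩ := mem_image.1 hA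
    obtain ⟨j₂, -, rfl⟩ := mem_image.1 hB
    rcases le_total j₁ j₂ with hj | hj
    exacts [Or.inl (galeLe_colSetOf T hj), Or.inr (galeLe_colSetOf T hj)]

variable {T}

lemma card_image_colSetOf (hreduced : ∀ j1 < μ.rowLen 0, ∀ j2 < μ.rowLen 0,
      colSetOf μ T j1 = colSetOf μ T j2 → j1 = j2) :
    #((range (μ.rowLen 0)).image (colSetOf μ T)) = μ.rowLen 0 := by
  rw [card_image_of_injOn fun j₁ h₁ j₂ h₂ => hreduced j₁ (mem_range.1 h₁) j₂ (mem_range.1 h₂),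
    card_range]

lemma partRow_le_rowLen_zero (k r : ℕ) : partRow μ T k r ≤ μ.rowLen 0 :=
  (card_filter_le _ _).trans ((card_range _).trans_le (μ.rowLen_anti 0 r r.zero_le))

lemma exists_row_lt_succ (hreduced : ∀ j1 < μ.rowLen 0, ∀ j2 < μ.rowLen 0,
      colSetOf μ T j1 = colSetOf μ T j2 → j1 = j2) {j : ℕ} (hj : j < μ.rowLen 0) :
    ∃ r, (r, j) ∈ μ ∧ ((r, j + 1) ∈ μ → T r j < T r (j + 1)) := by
  by_contra! h
  have hcolLen : μ.colLen (j + 1) = μ.colLen j := by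
    refine le_antisymm (μ.colLen_anti j (j + 1) j.le_succ) (not_lt.1 fun hlt => ?_)
    have hcell := (h _ (YoungDiagram.mem_iff_lt_colLen.2 hlt)).1
    exact lt_irrefl _ (YoungDiagram.mem_iff_lt_colLen.1 hcell)
  have hj1 : j + 1 < μ.rowLen 0 :=
    YoungDiagram.mem_iff_lt_rowLen.1 (h 0 (YoungDiagram.mem_iff_lt_rowLen.2 hj)).1
  refine absurd (hreduced j hj (j + 1) hj1 ?_) j.succ_ne_self.symm
  rw [colSetOf, colSetOf, hcolLen]
  refine image_congr fun i hi => ?_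
  have hcell := YoungDiagram.mem_iff_lt_colLen.2 (mem_range.1 hi)
  exact le_antisymm (T.row_weak j.lt_succ_self (h i hcell).1) (h i hcell).2

lemma partRow_eq_succ {r j : ℕ} (hrj : (r, j) ∈ μ)
    (hstep : (r, j + 1) ∈ μ → T r j < T r (j + 1)) : partRow μ T (T r j) r = j + 1 := by
  have hfilter : (range (μ.rowLen r)).filter (fun x => T r x ≤ T r j) = range (j + 1) := by
    ext x
    simp only [mem_filter, mem_range]
    constructor
    · rintro ⟨hx, hTx⟩
      by_contra! hjx
      have hlt := hstep (YoungDiagram.mem_iff_lt_rowLen.2 (by omega))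
      have hle := T.row_weak_of_le hjx (YoungDiagram.mem_iff_lt_rowLen.2 hx)
      omega
    · intro hx
      have hxj : x ≤ j := Nat.lt_succ_iff.1 hx
      exact ⟨hxj.trans_lt (YoungDiagram.mem_iff_lt_rowLen.1 hrj), T.row_weak_of_le hxj hrj⟩
  rw [partRow, hfilter, card_range]

lemma setOf_partRow_eq_Icc {n : ℕ} (hentries : ∀ c ∈ μ.cells, 1 ≤ T c.1 c.2 ∧ T c.1 c.2 ≤ n)
    (hreduced : ∀ j1 < μ.rowLen 0, ∀ j2 < μ.rowLen 0,
      colSetOf μ T j1 = colSetOf μ T j2 → j1 = j2) :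
    {m : ℕ | 0 < m ∧ ∃ i, 1 ≤ i ∧ i ≤ n ∧ ∃ r, m = partRow μ T i r} =
      Set.Icc 1 (μ.rowLen 0) := by
  ext m
  refine ⟨?_, fun ⟨hm1, hm⟩ => ?_⟩
  · rintro ⟨hm, i, -, -, r, rfl⟩
    exact ⟨hm, partRow_le_rowLen_zero i r⟩
  · obtain ⟨j, rfl⟩ : ∃ j, m = j + 1 := ⟨m - 1, by omega⟩
    obtain ⟨r, hrj, hstep⟩ := exists_row_lt_succ hreduced (by omega : j < μ.rowLen 0)
    obtain ⟨h1, hn⟩ := hentries (r, j) hrj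
    exact ⟨j.succ_pos, T r j, h1, hn, r, (partRow_eq_succ hrj hstep).symm⟩

end Tableau

/-- A reduced semistandard Young tableau `T` with entries in `[n]`
is maximal (its columns form a maximal chain in the tableau order on nonempty
subsets of `[n]`) if and only if the set of all (positive) parts of the partitions
`λ^{(i)}(T)`, `i ∈ [n]`, is exactly `{1, 2, …, binom(n+1,2)}`. -/
theorem stmt_13 (n : ℕ) (μ : YoungDiagram) (T : SemistandardYoungTableau μ)
    (hentries : ∀ c ∈ μ.cells, 1 ≤ T c.1 c.2 ∧ T c.1 c.2 ≤ n)
    (hreduced : ∀ j1 < μ.rowLen 0, ∀ j2 < μ.rowLen 0,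
      colSetOf μ T j1 = colSetOf μ T j2 → j1 = j2) :
    IsMaximalGaleChain n ((Finset.range (μ.rowLen 0)).image (colSetOf μ T)) ↔
      {m : ℕ | 0 < m ∧ ∃ i, 1 ≤ i ∧ i ≤ n ∧ ∃ r, m = partRow μ T i r} =
        Set.Icc 1 ((n + 1).choose 2) := by
  rw [(isGaleChain_colSetOf T hentries).isMaximalGaleChain_iff, card_image_colSetOf hreduced,
    setOf_partRow_eq_Icc hentries hreduced]
  exact ⟨congrArg _, fun h => by simpa using congrArg Set.ncard h⟩
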